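/- The Gács–Körner common information of partitions X and Y, defined as the maximum of H(Z) over partitions Z refined by both X and Y, equals μ(Rep(ΔX ∩ ΔY)), the measure of the maximal representable subset of ΔX ∩ ΔY. -/

import Mathlib

/-!
Möbius inversion on the subset lattice gives `∑_{T ⊆ S} μ(T) = p(S) log p(S)`. The atoms not
crossed by a partition `Z` are the subsets of its parts, and the sum of `μ` over all atoms is
`p(Ω) log p(Ω) = 0`, so `H(Z) = μ(ΔZ)`. Coarsening is reverse inclusion of contents (`X` refines
`Z` iff `ΔZ ⊆ ΔX`), so the common coarsenings of `X` and `Y` are the `Z` with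
`ΔZ ⊆ ΔX ∩ ΔY`; by maximality these are all coarser than `W`, which is itself one of them.
Entropy decreases under coarsening, so the maximum is `H(W) = μ(ΔW)`.
-/

open Finset BigOperators

variable {Ω : Type*} [Fintype Ω] [DecidableEq Ω]

/-- Probability of a subset: `p(T) = Σ_{ω∈T} p(ω)`. -/
def pS (p : Ω → ℝ) (T : Finset Ω) : ℝ := ∑ ω ∈ T, p ω

/-- `p(T) log p(T)` (with `0 log 0 = 0` since `Real.log 0 = 0`). -/
noncomputable def plog (p : Ω → ℝ) (T : Finset Ω) : ℝ := pS p T * Real.log (pS p T)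

/-- The interior-loss measure of an atom `S`. -/
noncomputable def mu (p : Ω → ℝ) (S : Finset Ω) : ℝ :=
  ∑ T ∈ S.powerset.filter (· ≠ ∅), (-1 : ℝ) ^ (S.card - T.card) * plog p T

/-- `μ` of a set of atoms, extended additively. -/
noncomputable def muSet (p : Ω → ℝ) (R : Finset (Finset Ω)) : ℝ := ∑ S ∈ R, mu p S

/-- A partition `X` crosses an atom `S` when `S` meets at least two distinct parts. -/
def crossed (X : Finpartition (univ : Finset Ω)) (S : Finset Ω) : Prop :=
  ∃ P ∈ X.parts, ∃ Q ∈ X.parts, P ≠ Q ∧ (S ∩ P).Nonempty ∧ (S ∩ Q).Nonempty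

open scoped Classical in
/-- The content `ΔX`: set of atoms crossed by the partition `X`. -/
noncomputable def content (X : Finpartition (univ : Finset Ω)) : Finset (Finset Ω) :=
  (univ : Finset (Finset Ω)).filter (fun S => 2 ≤ S.card ∧ crossed X S)

/-- Shannon entropy of a partition. -/
noncomputable def Hent (p : Ω → ℝ) (X : Finpartition (univ : Finset Ω)) : ℝ :=
  - ∑ P ∈ X.parts, pS p P * Real.log (pS p P)

/-- `X` refines `Z`: every part of `X` lies in a part of `Z`. -/
def refines (X Z : Finpartition (univ : Finset Ω)) : Prop :=
  ∀ P ∈ X.parts, ∃ Q ∈ Z.parts, P ⊆ Q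

namespace Finset

variable {α R : Type*} [DecidableEq α] [Ring R]

theorem sum_Icc_neg_one_pow_card_sub {U S : Finset α} (hUS : U ⊆ S) :
    ∑ T ∈ Icc U S, (-1 : R) ^ (#T - #U) = if U = S then 1 else 0 := by
  have hinj : Set.InjOn (U ∪ ·) ((S \ U).powerset : Set (Finset α)) := by
    intro V hV V' hV' hVV'
    simp only [coe_powerset, Set.mem_preimage, Set.mem_powerset_iff, coe_subset] at hV hV'
    rw [← union_sdiff_cancel_left (disjoint_of_subset_right hV disjoint_sdiff),
      ← union_sdiff_cancel_left (disjoint_of_subset_right hV' disjoint_sdiff)]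
    exact congrArg (· \ U) hVV'
  have hcard : ∀ V ∈ (S \ U).powerset, #(U ∪ V) - #U = #V := fun V hV => by
    rw [card_union_of_disjoint (disjoint_of_subset_right (mem_powerset.mp hV) disjoint_sdiff),
      add_tsub_cancel_left]
  rw [Icc_eq_image_powerset hUS, sum_image hinj, sum_congr rfl fun V hV => by rw [hcard V hV]]
  have hZ := congrArg (Int.cast : ℤ → R) (sum_powerset_neg_one_pow_card (x := S \ U))
  push_cast at hZ
  rw [hZ]
  exact if_congr (sdiff_eq_empty_iff_subset.trans ⟨hUS.antisymm, fun h => h ▸ subset_rfl⟩) rfl rfl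

theorem sum_powerset_sum_powerset_neg_one_pow_mul (g : Finset α → R) (S : Finset α) :
    ∑ T ∈ S.powerset, ∑ U ∈ T.powerset, (-1 : R) ^ (#T - #U) * g U = g S := by
  rw [sum_comm' (t' := S.powerset) (s' := fun U => Icc U S) fun T U => by
    simp only [mem_powerset, mem_Icc]
    exact ⟨fun ⟨hT, hU⟩ => ⟨⟨hU, hT⟩, hU.trans hT⟩, fun ⟨⟨hU, hT⟩, _⟩ => ⟨hT, hU⟩⟩]
  simp_rw [← sum_mul]
  rw [sum_congr rfl fun U hU => by rw [sum_Icc_neg_one_pow_card_sub (mem_powerset.mp hU)]]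
  simp

end Finset

section Information

variable {Ω : Type*} {p : Ω → ℝ}

lemma plog_empty : plog p ∅ = 0 := by simp [plog, pS]

lemma pS_mono (hp : ∀ ω, 0 ≤ p ω) {S T : Finset Ω} (h : S ⊆ T) : pS p S ≤ pS p T :=
  sum_le_sum_of_subset_of_nonneg h fun ω _ _ => hp ω

section Moebius

variable [DecidableEq Ω]

lemma mu_eq_sum_powerset (S : Finset Ω) :
    mu p S = ∑ T ∈ S.powerset, (-1 : ℝ) ^ (#S - #T) * plog p T := by
  refine sum_filter_of_ne fun T _ hT hT_empty => hT ?_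
  rw [hT_empty, plog_empty, mul_zero]

lemma mu_empty : mu p ∅ = 0 := by simp [mu_eq_sum_powerset, plog_empty]

lemma sum_powerset_mu (S : Finset Ω) : ∑ T ∈ S.powerset, mu p T = plog p S := by
  simp_rw [mu_eq_sum_powerset]
  exact sum_powerset_sum_powerset_neg_one_pow_mul (plog p) S

end Moebius

section Partition

variable [Fintype Ω] [DecidableEq Ω] {X Z : Finpartition (univ : Finset Ω)} {S : Finset Ω}

lemma refines_iff_le : refines X Z ↔ X ≤ Z := Iff.rfl

lemma crossed_iff_exists_part_ne :
    crossed X S ↔ ∃ a ∈ S, ∃ b ∈ S, X.part a ≠ X.part b := by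
  constructor
  · rintro ⟨P, hP, Q, hQ, hPQ, ⟨a, ha⟩, ⟨b, hb⟩⟩
    rw [mem_inter] at ha hb
    exact ⟨a, ha.1, b, hb.1, by rwa [X.part_eq_of_mem hP ha.2, X.part_eq_of_mem hQ hb.2]⟩
  · rintro ⟨a, haS, b, hbS, hab⟩
    exact ⟨X.part a, X.part_mem.mpr (mem_univ a), X.part b, X.part_mem.mpr (mem_univ b), hab,
      ⟨a, mem_inter.mpr ⟨haS, X.mem_part (mem_univ a)⟩⟩,
      ⟨b, mem_inter.mpr ⟨hbS, X.mem_part (mem_univ b)⟩⟩⟩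

lemma not_crossed_iff_subset_part {a : Ω} (ha : a ∈ S) : ¬ crossed X S ↔ S ⊆ X.part a := by
  simp only [crossed_iff_exists_part_ne, not_exists, not_and, not_not]
  refine ⟨fun h b hb => ?_, fun h b hb c hc => ?_⟩
  · rw [X.mem_part_iff_part_eq_part (mem_univ b) (mem_univ a)]
    exact h b hb a ha
  · rw [(X.mem_part_iff_part_eq_part (mem_univ b) (mem_univ a)).mp (h hb),
      (X.mem_part_iff_part_eq_part (mem_univ c) (mem_univ a)).mp (h hc)]

lemma mem_content : S ∈ content X ↔ crossed X S := by
  simp only [content, mem_filter, mem_univ, true_and, and_iff_right_iff_imp]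
  rw [crossed_iff_exists_part_ne]
  rintro ⟨a, ha, b, hb, hab⟩
  exact one_lt_card.mpr ⟨a, ha, b, hb, fun h => hab (h ▸ rfl)⟩

lemma le_iff_part_eq_imp_part_eq :
    X ≤ Z ↔ ∀ a b, X.part a = X.part b → Z.part a = Z.part b := by
  constructor
  · intro h a b hab
    obtain ⟨Q, hQ, haQ⟩ := h (X.part_mem.mpr (mem_univ a))
    rw [Z.part_eq_of_mem hQ (haQ (X.mem_part (mem_univ a))),
      Z.part_eq_of_mem hQ (haQ (hab ▸ X.mem_part (mem_univ b)))]
  · intro h P hP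
    obtain ⟨a, ha⟩ := X.nonempty_of_mem_parts hP
    refine ⟨Z.part a, Z.part_mem.mpr (mem_univ a), fun b hb => ?_⟩
    rw [Z.mem_part_iff_part_eq_part (mem_univ b) (mem_univ a)]
    exact h b a (by rw [X.part_eq_of_mem hP hb, X.part_eq_of_mem hP ha])

lemma content_subset_content_iff : content Z ⊆ content X ↔ X ≤ Z := by
  rw [le_iff_part_eq_imp_part_eq]
  constructor
  · intro h a b hab
    by_contra hZ
    have hpair : crossed Z {a, b} :=
      crossed_iff_exists_part_ne.mpr ⟨a, by simp, b, by simp, hZ⟩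
    obtain ⟨c, hc, d, hd, hcd⟩ := crossed_iff_exists_part_ne.mp (mem_content.mp
      (h (mem_content.mpr hpair)))
    simp only [mem_insert, mem_singleton] at hc hd
    rcases hc with rfl | rfl <;> rcases hd with rfl | rfl <;> simp_all
  · intro h S hS
    obtain ⟨a, ha, b, hb, hab⟩ := crossed_iff_exists_part_ne.mp (mem_content.mp hS)
    exact mem_content.mpr (crossed_iff_exists_part_ne.mpr ⟨a, ha, b, hb, mt (h a b) hab⟩)

lemma sum_parts_sum_eq_sum_part (X : Finpartition (univ : Finset Ω)) {M : Type*}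
    [AddCommMonoid M] (f : Ω → Finset Ω → M) :
    ∑ P ∈ X.parts, ∑ ω ∈ P, f ω P = ∑ ω, f ω (X.part ω) := by
  calc ∑ P ∈ X.parts, ∑ ω ∈ P, f ω P = ∑ P ∈ X.parts, ∑ ω ∈ id P, f ω (X.part ω) :=
        sum_congr rfl fun P hP => sum_congr rfl fun ω hω => by rw [X.part_eq_of_mem hP hω]
    _ = ∑ ω ∈ X.parts.biUnion id, f ω (X.part ω) := (sum_biUnion X.disjoint).symm
    _ = ∑ ω, f ω (X.part ω) := by rw [X.biUnion_parts]

lemma Hent_eq_neg_sum_log_pS_part (p : Ω → ℝ) (X : Finpartition (univ : Finset Ω)) :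
    Hent p X = -∑ ω, p ω * Real.log (pS p (X.part ω)) := by
  simp_rw [Hent, pS, sum_mul]
  rw [sum_parts_sum_eq_sum_part X fun ω P => p ω * Real.log (∑ ω' ∈ P, p ω')]

lemma Hent_anti (hp : ∀ ω, 0 ≤ p ω) (h : X ≤ Z) : Hent p Z ≤ Hent p X := by
  rw [Hent_eq_neg_sum_log_pS_part, Hent_eq_neg_sum_log_pS_part, neg_le_neg_iff]
  refine sum_le_sum fun ω _ => ?_
  rcases (hp ω).eq_or_lt with hω | hω
  · simp [← hω]
  have hsub : X.part ω ⊆ Z.part ω := by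
    obtain ⟨Q, hQ, hPQ⟩ := h (X.part_mem.mpr (mem_univ ω))
    rwa [Z.part_eq_of_mem hQ (hPQ (X.mem_part (mem_univ ω)))]
  have hpos : 0 < pS p (X.part ω) :=
    hω.trans_le (single_le_sum (fun ω _ => hp ω) (X.mem_part (mem_univ ω)))
  exact mul_le_mul_of_nonneg_left (Real.log_le_log hpos (pS_mono hp hsub)) hω.le

lemma sum_compl_content_eq_sum_parts_sum_powerset {M : Type*} [AddCommMonoid M] (X : Finpartition (univ : Finset Ω))
    (f : Finset Ω → M) (hf : f ∅ = 0) :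
    ∑ S ∈ (content X)ᶜ, f S = ∑ P ∈ X.parts, ∑ S ∈ P.powerset, f S := by
  have hdisj : (X.parts : Set (Finset Ω)).PairwiseDisjoint fun P => P.powerset.erase ∅ := by
    intro P hP Q hQ hPQ
    refine disjoint_left.mpr fun S hSP hSQ => ?_
    simp only [mem_erase, mem_powerset] at hSP hSQ
    obtain ⟨a, ha⟩ := nonempty_iff_ne_empty.mpr hSP.1
    exact hPQ (X.eq_of_mem_parts hP hQ (hSP.2 ha) (hSQ.2 ha))
  rw [← sum_congr rfl fun P (_ : P ∈ X.parts) => sum_erase P.powerset hf, ← sum_biUnion hdisj]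
  symm
  refine sum_subset (fun S hS => ?_) fun S hS hS' => ?_
  · obtain ⟨P, hP, hS⟩ := mem_biUnion.mp hS
    simp only [mem_erase, mem_powerset] at hS
    obtain ⟨a, ha⟩ := nonempty_iff_ne_empty.mpr hS.1
    refine mem_compl.mpr fun hX => (not_crossed_iff_subset_part ha).mpr ?_ (mem_content.mp hX)
    rw [X.part_eq_of_mem hP (hS.2 ha)]
    exact hS.2
  · by_contra hS_empty
    obtain ⟨a, ha⟩ := (nonempty_iff_ne_empty (s := S)).mpr (by rintro rfl; exact hS_empty hf)
    refine hS' (mem_biUnion.mpr ⟨X.part a, X.part_mem.mpr (mem_univ a), ?_⟩)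
    refine mem_erase.mpr ⟨ne_empty_of_mem ha, mem_powerset.mpr ?_⟩
    exact (not_crossed_iff_subset_part ha).mp (mt mem_content.mpr (mem_compl.mp hS))

lemma Hent_eq_muSet_content (hsum : ∑ ω, p ω = 1) (X : Finpartition (univ : Finset Ω)) :
    Hent p X = muSet p (content X) := by
  have htotal : ∑ S, mu p S = 0 := by
    rw [← powerset_univ, sum_powerset_mu, plog, pS, hsum, Real.log_one, mul_zero]
  have huncrossed : ∑ S ∈ (content X)ᶜ, mu p S = ∑ P ∈ X.parts, plog p P := by
    rw [sum_compl_content_eq_sum_parts_sum_powerset X _ mu_empty]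
    exact sum_congr rfl fun P _ => sum_powerset_mu P
  change -∑ P ∈ X.parts, plog p P = ∑ S ∈ content X, mu p S
  linarith [sum_add_sum_compl (content X) (mu p)]

end Partition

end Information

theorem gacsKorner_eq_muSet_rep {Ω : Type*} [Fintype Ω] [DecidableEq Ω] (p : Ω → ℝ)
    (hp : ∀ ω, 0 ≤ p ω) (hsum : ∑ ω, p ω = 1)
    (X Y : Finpartition (univ : Finset Ω))
    (W : Finpartition (univ : Finset Ω))
    (hW : content W ⊆ content X ∩ content Y)
    (hWmax : ∀ V : Finpartition (univ : Finset Ω),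
        content V ⊆ content X ∩ content Y → content V ⊆ content W) :
    IsGreatest {h : ℝ | ∃ Z : Finpartition (univ : Finset Ω),
        refines X Z ∧ refines Y Z ∧ h = Hent p Z}
      (muSet p (content W)) := by
  have hcommon : ∀ Z, refines X Z ∧ refines Y Z ↔ W ≤ Z := fun Z => by
    simp only [refines_iff_le, ← content_subset_content_iff, ← subset_inter_iff]
    exact ⟨hWmax Z, fun hZW => hZW.trans hW⟩
  obtain ⟨hXW, hYW⟩ := (hcommon W).mpr le_rfl
  rw [← Hent_eq_muSet_content hsum W]
  refine ⟨⟨W, hXW, hYW, rfl⟩, ?_⟩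
  rintro _ ⟨Z, hXZ, hYZ, rfl⟩
  exact Hent_anti hp ((hcommon Z).mp ⟨hXZ, hYZ⟩)
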